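/- arXiv:0906.2710 — 4 statements merged into one kernel-verified Lean document; each statement's English description precedes it below -/
import Mathlib

section
/- For every p(x) ∈ ℂ((x)), the formal series φ(x,z) := e^{z p(x) d/dx} x = Σ_{n≥0} (z^n/n!) (p(x) d/dx)^n x ∈ ℂ((x))[[z]] is an associate of the one-dimensional additive formal group F_a(x,y) = x+y; that is, φ(x,0) = x and φ(φ(x,x₂),x₀) = φ(x,x₀+x₂) in ℂ((x))[[x₀,x₂]]. -/
noncomputable section
open scoped Classical

abbrev L : Type := LaurentSeries ℂ
abbrev LZ : Type := PowerSeries L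

def Xl : L := HahnSeries.single 1 1

/-- coefficient of `z^n x^j` in an element of `ℂ((x))[[z]]`. -/
def lzCoeff (f : LZ) (n : ℕ) (j : ℤ) : ℂ := ((PowerSeries.coeff (R := L) n) f).coeff j

/-- integer powers in a commutative ring, via `Ring.inverse` for negative exponents. -/
def zpowR {R : Type*} [CommRing R] (g : R) (m : ℤ) : R :=
  if 0 ≤ m then g ^ m.toNat else Ring.inverse g ^ (-m).toNat

/-- the Laurent series with prescribed coefficients, when it exists (else `0`). -/
def mkL (c : ℤ → ℂ) : L :=
  if h : ∃ g : L, ∀ j, g.coeff j = c j then h.choose else 0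

def mkLZ (c : ℕ → ℤ → ℂ) : LZ :=
  if h : ∃ g : LZ, ∀ n j, lzCoeff g n j = c n j then h.choose else 0

/-- Substitution `f(φ(x,z))` of `φ(x,z) ∈ ℂ((x))[[z]]` into `f ∈ ℂ((x))`. -/
def substL (f : L) (φ : LZ) : LZ :=
  mkLZ fun n j => ∑ᶠ m : ℤ, f.coeff m * lzCoeff (zpowR φ m) n j

/-- `φ(φ(x,x₂),x₀)` as an element of `ℂ((x))[[x₂]][[x₀]]` (outer variable `x₀`). -/
def assocLHS (φ : LZ) : PowerSeries LZ :=
  PowerSeries.mk fun n => substL ((PowerSeries.coeff (R := L) n) φ) φ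

/-- `φ(x,x₀+x₂)` as an element of `ℂ((x))[[x₂]][[x₀]]` (outer variable `x₀`). -/
def assocRHS (φ : LZ) : PowerSeries LZ :=
  PowerSeries.mk fun n => PowerSeries.mk fun m =>
    (((n+m).choose n : ℂ)) • (PowerSeries.coeff (R := L) (n+m)) φ

/-- `φ(x,z) ∈ ℂ((x))[[z]]` is an associate of the additive formal group:
`φ(x,0) = x` and `φ(φ(x,x₂),x₀) = φ(x,x₀+x₂)`. -/
def IsAssociate (φ : LZ) : Prop :=
  (PowerSeries.constantCoeff (R := L)) φ = Xl ∧ assocLHS φ = assocRHS φ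

/-- the formal derivative `d/dx` on `ℂ((x))`. -/
def lderiv (f : L) : L := mkL fun j => ((j+1 : ℤ) : ℂ) * f.coeff (j+1)

/-- the operator `p(x) d/dx` on `ℂ((x))`. -/
def pd (p : L) : L → L := fun f => p * lderiv f

/-- `e^{z p(x) d/dx} x = Σ_{n≥0} (z^n/n!) (p(x)d/dx)^n x ∈ ℂ((x))[[z]]`. -/
def expFlow (p : L) : LZ :=
  PowerSeries.mk fun n => ((n.factorial : ℂ))⁻¹ • ((pd p)^[n] Xl)

/-!
Write `D = p d/dx` and `E_n = D^n/n!`. Since `D` is a derivation, the Leibniz rule makes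
`f ↦ Σ E_n f z^n` a ring homomorphism `ℂ((x)) → ℂ((x))[[z]]`; it sends `x` to `φ = expFlow p`,
hence `x^m` to `φ^m` for every `m ∈ ℤ`. Each coefficient of `E_n f` involves only finitely
many coefficients of `f`, because `E_n` lowers the order by at most `n (1 - ord p)`; so this
ring homomorphism is the substitution `f ↦ f(φ)`. The associativity
`φ(φ(x,x₂),x₀) = φ(x,x₀+x₂)` then reduces to `E_m E_n = binom(n+m, n) E_{n+m}`.
-/

open PowerSeries Finset

namespace Derivation

variable {K A : Type*} [Field K] [CommRing A] [Algebra K A] (D : Derivation K A A)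

def divPow (n : ℕ) : Module.End K A := (n.factorial : K)⁻¹ • (D : Module.End K A) ^ n

lemma divPow_apply (n : ℕ) (f : A) : D.divPow n f = (n.factorial : K)⁻¹ • (⇑D)^[n] f := by
  rw [divPow, LinearMap.smul_apply, Module.End.pow_apply, coeFn_coe]

@[simp] lemma divPow_zero : D.divPow 0 = 1 := by simp [divPow]

lemma divPow_one_of_ne_zero {n : ℕ} (hn : n ≠ 0) : D.divPow n 1 = 0 := by
  obtain ⟨n, rfl⟩ := Nat.exists_eq_succ_of_ne_zero hn
  rw [divPow_apply, Function.iterate_succ_apply, map_one_eq_zero, iterate_map_zero, smul_zero]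

variable [CharZero K]

lemma map_divPow (n : ℕ) (f : A) :
    D (D.divPow n f) = ((n + 1 : ℕ) : K) • D.divPow (n + 1) f := by
  rw [divPow_apply, divPow_apply, map_smul, ← Function.iterate_succ_apply' D, smul_smul]
  congr 1
  push_cast [Nat.factorial_succ]
  field_simp

lemma divPow_mul (n : ℕ) (f g : A) :
    D.divPow n (f * g) = ∑ kl ∈ antidiagonal n, D.divPow kl.1 f * D.divPow kl.2 g := by
  induction n with
  | zero => simp
  | succ n ih =>
    refine smul_right_injective A (Nat.cast_ne_zero.2 n.succ_ne_zero : ((n + 1 : ℕ) : K) ≠ 0) ?_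
    calc ((n + 1 : ℕ) : K) • D.divPow (n + 1) (f * g)
        = ∑ kl ∈ antidiagonal n,
            ((((kl.1 + 1 : ℕ) : K) • D.divPow (kl.1 + 1) f) * D.divPow kl.2 g
              + D.divPow kl.1 f * (((kl.2 + 1 : ℕ) : K) • D.divPow (kl.2 + 1) g)) := by
          rw [← map_divPow, ih, map_sum]
          refine sum_congr rfl fun kl _ => ?_
          rw [leibniz, map_divPow, map_divPow, smul_eq_mul, smul_eq_mul,
            mul_comm (D.divPow kl.2 g), add_comm]
      _ = ∑ kl ∈ antidiagonal (n + 1), (kl.1 : K) • (D.divPow kl.1 f * D.divPow kl.2 g) +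
            ∑ kl ∈ antidiagonal (n + 1), (kl.2 : K) • (D.divPow kl.1 f * D.divPow kl.2 g) := by
          rw [sum_add_distrib, Finset.Nat.sum_antidiagonal_succ,
            Finset.Nat.sum_antidiagonal_succ']
          simp only [Nat.cast_zero, zero_smul, zero_add, smul_mul_assoc, mul_smul_comm]
      _ = ((n + 1 : ℕ) : K) •
            ∑ kl ∈ antidiagonal (n + 1), D.divPow kl.1 f * D.divPow kl.2 g := by
          rw [← sum_add_distrib, smul_sum]
          refine sum_congr rfl fun kl hkl => ?_
          rw [← add_smul, ← Nat.cast_add, mem_antidiagonal.1 hkl]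

lemma divPow_divPow (m n : ℕ) (f : A) :
    D.divPow m (D.divPow n f) = ((n + m).choose n : K) • D.divPow (n + m) f := by
  have h : D.divPow m * D.divPow n = ((n + m).choose n : K) • D.divPow (n + m) := by
    rw [divPow, divPow, divPow, smul_mul_smul_comm, ← pow_add, smul_smul, add_comm m n,
      Nat.cast_add_choose]
    have := (n + m).factorial_ne_zero
    field_simp
  exact LinearMap.congr_fun h f

def exp : A →+* A⟦X⟧ where
  toFun f := PowerSeries.mk fun n => D.divPow n f
  map_one' := by
    ext n
    rcases eq_or_ne n 0 with rfl | hn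
    · simp
    · simp [coeff_one, hn, divPow_one_of_ne_zero]
  map_mul' f g := by
    ext n
    simp [coeff_mul, divPow_mul]
  map_zero' := by
    ext
    simp
  map_add' f g := by
    ext
    simp

@[simp] lemma coeff_exp (n : ℕ) (f : A) : coeff n (D.exp f) = D.divPow n f :=
  coeff_mk n fun n => D.divPow n f

end Derivation

def LowersOrderAtMost {R : Type*} [Zero R] (T : LaurentSeries R → LaurentSeries R) (w : ℤ) :
    Prop :=
  ∀ f j, (∀ m ≤ j + w, f.coeff m = 0) → (T f).coeff j = 0

namespace LowersOrderAtMost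

variable {R : Type*} [Zero R] {T S : LaurentSeries R → LaurentSeries R} {w v : ℤ}

lemma comp (hT : LowersOrderAtMost T w) (hS : LowersOrderAtMost S v) :
    LowersOrderAtMost (T ∘ S) (w + v) :=
  fun _ j hf => hT _ j fun m hm => hS _ m fun m' hm' => hf m' (by omega)

lemma iterate (hT : LowersOrderAtMost T w) (n : ℕ) : LowersOrderAtMost T^[n] (n * w) := by
  induction n with
  | zero => exact fun f j hf => hf j (by simp)
  | succ n ih =>
    rw [Function.iterate_succ', Nat.cast_succ, add_one_mul, add_comm]
    exact hT.comp ih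

end LowersOrderAtMost

lemma LowersOrderAtMost.const_smul {R : Type*} [Semiring R]
    {T : LaurentSeries R → LaurentSeries R} {w : ℤ} (hT : LowersOrderAtMost T w) (c : R) :
    LowersOrderAtMost (fun f => c • T f) w :=
  fun f j hf => by rw [HahnSeries.coeff_smul, hT f j hf, smul_zero]

lemma lowersOrderAtMost_mul_left {R : Type*} [Semiring R] (p : LaurentSeries R) :
    LowersOrderAtMost (p * ·) (-p.order) := by
  intro f j hf
  rw [HahnSeries.coeff_mul]
  refine sum_eq_zero fun ab hab => ?_
  obtain ⟨-, -, hsum⟩ := Finset.mem_antidiagonal.1 hab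
  rcases lt_or_ge ab.1 p.order with ha | ha
  · rw [HahnSeries.coeff_eq_zero_of_lt_order ha, zero_mul]
  · rw [hf ab.2 (by omega), mul_zero]

/-- The functional `f ↦ (T f).coeff j` only sees the finitely many coefficients of `f` in
`[f.order, j + w]`, so it is the finite sum of its values on monomials. -/
lemma coeff_eq_finsum {R : Type*} [Ring R] (T : LaurentSeries R →ₗ[R] LaurentSeries R) {w : ℤ}
    (hT : LowersOrderAtMost T w) (f : LaurentSeries R) (j : ℤ) :
    (T f).coeff j = ∑ᶠ m, f.coeff m * (T (HahnSeries.single m 1)).coeff j := by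
  set s := Icc f.order (j + w)
  set g : LaurentSeries R := ∑ m ∈ s, f.coeff m • HahnSeries.single m 1
  have hfg : ∀ m ≤ j + w, (f - g).coeff m = 0 := by
    intro m hm
    rw [HahnSeries.coeff_sub, HahnSeries.coeff_sum]
    simp only [HahnSeries.coeff_smul, HahnSeries.coeff_single, smul_eq_mul, mul_ite, mul_one,
      mul_zero, sum_ite_eq]
    rcases lt_or_ge m f.order with hlt | hge
    · simp [HahnSeries.coeff_eq_zero_of_lt_order hlt]
    · rw [if_pos (mem_Icc.2 ⟨hge, hm⟩), sub_self]
  have hsupp :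
      (Function.support fun m => f.coeff m * (T (HahnSeries.single m 1)).coeff j) ⊆ s := by
    intro m hm
    refine mem_Icc.2 ⟨HahnSeries.order_le_of_coeff_ne_zero (left_ne_zero_of_mul hm), ?_⟩
    by_contra! hlt
    exact right_ne_zero_of_mul hm (hT _ j fun m' hm' => HahnSeries.coeff_single_of_ne (by omega))
  calc (T f).coeff j = (T g).coeff j := by
        rw [← sub_add_cancel f g, map_add, HahnSeries.coeff_add, hT _ j hfg, zero_add]
    _ = ∑ m ∈ s, f.coeff m * (T (HahnSeries.single m 1)).coeff j := by
        simp only [g, map_sum, map_smul, HahnSeries.coeff_sum, HahnSeries.coeff_smul, smul_eq_mul]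
    _ = ∑ᶠ m, f.coeff m * (T (HahnSeries.single m 1)).coeff j :=
        (finsum_eq_sum_of_support_subset _ hsupp).symm

lemma map_zpowR {R S : Type*} [CommRing R] [CommRing S] (Φ : R →+* S) {g : R} (hg : IsUnit g)
    (m : ℤ) : Φ (zpowR g m) = zpowR (Φ g) m := by
  obtain ⟨u, rfl⟩ := hg
  unfold zpowR
  split_ifs
  · exact map_pow Φ _ _
  · rw [map_pow, Ring.inverse_unit]
    exact congrArg (· ^ (-m).toNat) (Ring.inverse_unit (Units.map (Φ : R →* S) u)).symm

lemma zpowR_eq_zpow {F : Type*} [Field F] (g : F) (m : ℤ) : zpowR g m = g ^ m := by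
  unfold zpowR
  split_ifs with hm
  · rw [← zpow_natCast, Int.toNat_of_nonneg hm]
  · rw [Ring.inverse_eq_inv', inv_pow, ← zpow_natCast, Int.toNat_of_nonneg (by omega), zpow_neg,
      inv_inv]

lemma mkL_eq_of_coeff {c : ℤ → ℂ} {g : L} (h : ∀ j, g.coeff j = c j) : mkL c = g := by
  have hex : ∃ g : L, ∀ j, g.coeff j = c j := ⟨g, h⟩
  rw [mkL, dif_pos hex]
  ext j
  rw [hex.choose_spec j, h j]

lemma lderiv_eq_derivative (f : L) : lderiv f = LaurentSeries.derivative ℂ f :=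
  mkL_eq_of_coeff fun j => by simp [LaurentSeries.hasseDeriv_coeff]

lemma coeff_lderiv (f : L) (j : ℤ) :
    (lderiv f).coeff j = ((j + 1 : ℤ) : ℂ) * f.coeff (j + 1) := by
  simp [lderiv_eq_derivative, LaurentSeries.hasseDeriv_coeff]

lemma coeff_Xl_mul_lderiv (f : L) (j : ℤ) : (Xl * lderiv f).coeff j = j * f.coeff j := by
  have h := HahnSeries.coeff_single_mul_add (r := (1 : ℂ)) (x := lderiv f) (a := j - 1) (b := 1)
  rw [sub_add_cancel] at h
  rw [Xl, h, one_mul, coeff_lderiv, sub_add_cancel]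

lemma support_Xl_mul_lderiv_subset (f : L) : (Xl * lderiv f).support ⊆ f.support :=
  fun j hj => right_ne_zero_of_mul (by rwa [HahnSeries.mem_support, coeff_Xl_mul_lderiv] at hj)

/-- `x d/dx` acts on `x^j` by `j`, so its Leibniz rule needs no index shift. -/
lemma Xl_mul_lderiv_mul (f g : L) :
    Xl * lderiv (f * g) = f * (Xl * lderiv g) + (Xl * lderiv f) * g := by
  ext j
  rw [HahnSeries.coeff_add, coeff_Xl_mul_lderiv, HahnSeries.coeff_mul,
    HahnSeries.coeff_mul_right' g.isPWO_support (support_Xl_mul_lderiv_subset g),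
    HahnSeries.coeff_mul_left' f.isPWO_support (support_Xl_mul_lderiv_subset f),
    mul_sum, ← sum_add_distrib]
  refine sum_congr rfl fun ab hab => ?_
  rw [coeff_Xl_mul_lderiv, coeff_Xl_mul_lderiv, ← (Finset.mem_antidiagonal.1 hab).2.2]
  push_cast
  ring

lemma Xl_ne_zero : Xl ≠ 0 := HahnSeries.single_ne_zero one_ne_zero

lemma lderiv_mul (f g : L) : lderiv (f * g) = f * lderiv g + g * lderiv f := by
  refine mul_left_cancel₀ Xl_ne_zero ?_
  rw [Xl_mul_lderiv_mul]
  ring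

/-- Without this instance `HahnSeries.powerSeriesAlgebra` is found first; its action
`c • f = C c * f` is not definitionally the coefficientwise one used in `expFlow`. -/
instance : Algebra ℂ L := HahnSeries.instAlgebra

def lderivDerivation : Derivation ℂ L L :=
  Derivation.mk' (LaurentSeries.derivative ℂ) fun f g => by
    simp only [← lderiv_eq_derivative, lderiv_mul, smul_eq_mul]

def pdDerivation (p : L) : Derivation ℂ L L := p • lderivDerivation

lemma coe_pdDerivation (p : L) : ⇑(pdDerivation p) = pd p := by
  ext f : 1
  rw [pdDerivation, Derivation.smul_apply, smul_eq_mul, pd, lderiv_eq_derivative]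
  rfl

lemma expFlow_eq_exp (p : L) : expFlow p = (pdDerivation p).exp Xl := by
  ext n : 1
  rw [Derivation.coeff_exp, Derivation.divPow_apply, coe_pdDerivation, expFlow, coeff_mk]

lemma lowersOrderAtMost_lderiv : LowersOrderAtMost lderiv 1 :=
  fun f j hf => by rw [coeff_lderiv, hf (j + 1) le_rfl, mul_zero]

lemma lowersOrderAtMost_divPow_pdDerivation (p : L) (n : ℕ) :
    LowersOrderAtMost ((pdDerivation p).divPow n) (n * (-p.order + 1)) := by
  have hfun :
      ⇑((pdDerivation p).divPow n) = fun f => (n.factorial : ℂ)⁻¹ • (pd p)^[n] f := by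
    ext f : 1
    rw [Derivation.divPow_apply, coe_pdDerivation]
  rw [hfun]
  exact (((lowersOrderAtMost_mul_left p).comp lowersOrderAtMost_lderiv).iterate n).const_smul _

lemma zpowR_Xl (m : ℤ) : zpowR Xl m = HahnSeries.single m 1 := by
  rw [zpowR_eq_zpow, Xl, ← RatFunc.single_zpow]

lemma mkLZ_eq_of_lzCoeff {c : ℕ → ℤ → ℂ} {g : LZ} (h : ∀ n j, lzCoeff g n j = c n j) :
    mkLZ c = g := by
  have hex : ∃ g : LZ, ∀ n j, lzCoeff g n j = c n j := ⟨g, h⟩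
  rw [mkLZ, dif_pos hex]
  ext n j
  exact (hex.choose_spec n j).trans (h n j).symm

lemma substL_expFlow (p f : L) : substL f (expFlow p) = (pdDerivation p).exp f := by
  refine mkLZ_eq_of_lzCoeff fun n j => ?_
  have hpow (m : ℤ) : zpowR (expFlow p) m = (pdDerivation p).exp (HahnSeries.single m 1) := by
    rw [expFlow_eq_exp, ← map_zpowR _ (isUnit_iff_ne_zero.2 Xl_ne_zero), zpowR_Xl]
  simp only [lzCoeff, hpow, Derivation.coeff_exp]
  exact coeff_eq_finsum _ (lowersOrderAtMost_divPow_pdDerivation p n) f j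

theorem expFlow_isAssociate (p : L) : IsAssociate (expFlow p) := by
  refine ⟨?_, ?_⟩
  · rw [expFlow_eq_exp, ← coeff_zero_eq_constantCoeff_apply, Derivation.coeff_exp,
      Derivation.divPow_zero, Module.End.one_apply]
  · ext n : 1
    rw [assocLHS, assocRHS, coeff_mk, coeff_mk, substL_expFlow]
    ext m : 1
    rw [coeff_mk, expFlow_eq_exp, Derivation.coeff_exp, Derivation.coeff_exp, Derivation.coeff_exp,
      Derivation.divPow_divPow]

end
end

section
/- Every associate φ(x,z) of the additive formal group F_a(x,y) = x+y satisfies the formal differential equation ∂φ/∂z (x,z) = p(φ(x,z)) in ℂ((x))[[z]], where p(x) := ∂φ/∂z(x,0) ∈ ℂ((x)) and p(φ(x,z)) denotes the substitution of φ(x,z) into p. -/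
noncomputable section
open scoped Classical

/-- the formal partial derivative `∂/∂z` on `ℂ((x))[[z]]`, computed coefficientwise. -/
def zderivLZ (φ : LZ) : LZ :=
  PowerSeries.mk fun n => (((n : ℂ) + 1)) • (PowerSeries.coeff (R := L) (n+1)) φ

theorem coeff_one_assocRHS (φ : LZ) :
    PowerSeries.coeff (R := LZ) 1 (assocRHS φ) = zderivLZ φ := by
  ext n
  simp [assocRHS, zderivLZ, Nat.add_comm 1 n, add_comm (n : ℂ) 1]

/-- Every associate `φ(x,z)` of `F_a(x,y) = x+y` satisfies the formal differential equation
`∂φ/∂z(x,z) = p(φ(x,z))` where `p(x) := ∂φ/∂z(x,0) ∈ ℂ((x))`. -/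
theorem associate_satisfies_ode (φ : LZ) (h : IsAssociate φ) :
    zderivLZ φ = substL ((PowerSeries.coeff (R := L) 1) φ) φ := by
  rw [← coeff_one_assocRHS, ← h.2, assocLHS, PowerSeries.coeff_mk]

end
end

section
/- Let φ(x,z) be an associate of the additive formal group F_a(x,y) = x+y. Then φ(φ(x,z),−z) = x and φ(φ(x,−z),z) = x in ℂ((x))[[z]], where φ(x,−z) denotes the image of φ(x,z) under the substitution z ↦ −z. -/
noncomputable section
open scoped Classical

/-- Evaluation of `F ∈ ℂ((x))[[x₂]][[x₀]]` (outer variable `x₀`) at `x₀ = a·z`, `x₂ = b·z`: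
the coefficient of `z^k` is `Σ_{n+m=k} a^n b^m F_{n,m}`. -/
def diagEval (a b : ℂ) (F : PowerSeries LZ) : LZ :=
  PowerSeries.mk fun k => ∑ n ∈ Finset.range (k+1),
    (a ^ n * b ^ (k - n)) • (PowerSeries.coeff (R := L) (k - n)) ((PowerSeries.coeff (R := LZ) n) F)

/-- By the binomial theorem, evaluating `φ(x, x₀ + x₂)` at `x₀ = a z`, `x₂ = b z` gives `φ(x, (a + b) z)`. -/
lemma diagEval_assocRHS (a b : ℂ) (φ : LZ) :
    diagEval a b (assocRHS φ) = PowerSeries.rescale (HahnSeries.C (a + b)) φ := by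
  refine PowerSeries.ext fun k => ?_
  have hterm : ∀ n ∈ Finset.range (k + 1),
      (a ^ n * b ^ (k - n)) • PowerSeries.coeff (k - n) (PowerSeries.coeff n (assocRHS φ))
        = (a ^ n * b ^ (k - n) * (k.choose n : ℂ)) • PowerSeries.coeff k φ := by
    intro n hn
    have hnk : n + (k - n) = k := Nat.add_sub_cancel' (Nat.lt_succ_iff.mp (Finset.mem_range.mp hn))
    rw [assocRHS, PowerSeries.coeff_mk, PowerSeries.coeff_mk, hnk, smul_smul]
  rw [diagEval, PowerSeries.coeff_mk, Finset.sum_congr rfl hterm, ← Finset.sum_smul, ← add_pow,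
    PowerSeries.coeff_rescale, ← map_pow, HahnSeries.C_mul_eq_smul]

lemma diagEval_assocRHS_of_add_eq_zero {a b : ℂ} (hab : a + b = 0) (φ : LZ) :
    diagEval a b (assocRHS φ) = PowerSeries.C (PowerSeries.constantCoeff φ) := by
  rw [diagEval_assocRHS, hab, map_zero, PowerSeries.rescale_zero]
  rfl

/-- For an associate `φ` of `F_a`: `φ(φ(x,z),−z) = x` and `φ(φ(x,−z),z) = x`,
where these are the images of `φ(φ(x,x₂),x₀)` under `x₀ = ∓z`, `x₂ = ±z`. -/
theorem associate_inverse (φ : LZ) (h : IsAssociate φ) :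
    diagEval (-1) 1 (assocLHS φ) = PowerSeries.C (R := L) Xl ∧
      diagEval 1 (-1) (assocLHS φ) = PowerSeries.C (R := L) Xl := by
  obtain ⟨hφ₀, hassoc⟩ := h
  rw [hassoc, diagEval_assocRHS_of_add_eq_zero (neg_add_cancel 1),
    diagEval_assocRHS_of_add_eq_zero (add_neg_cancel 1), hφ₀]
  exact ⟨rfl, rfl⟩

end
end

section
/- Let φ(x,z) be an associate of the additive formal group F_a(x,y) = x+y with φ(x,z) ≠ x, and let W be a complex vector space. Then every compatible subset of ℰ(W) is φ-quasi compatible, and every quasi compatible subset of ℰ(W) is φ-quasi compatible. -/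
noncomputable section
open scoped Classical

/-- the exponent `(a, b)` as a multidegree for two-variable power series. -/
def idx2 (a b : ℕ) : Fin 2 →₀ ℕ := Finsupp.single 0 a + Finsupp.single 1 b

/-- Substitution `p(φ(x,z), x)` of `x₁ = φ(x,z)`, `x₂ = x` into `p(x₁,x₂) ∈ ℂ[[x₁,x₂]]`. -/
def substMv (p : MvPowerSeries (Fin 2) ℂ) (φ : LZ) : LZ :=
  mkLZ fun n j => ∑ᶠ ab : ℕ × ℕ,
    (MvPowerSeries.coeff (R := ℂ) (idx2 ab.1 ab.2) p) *
      lzCoeff (φ ^ ab.1 * (PowerSeries.C (R := L) Xl) ^ ab.2) n j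

variable (W : Type) [AddCommGroup W] [Module ℂ W]

/-- `ℰ(W) = Hom(W, W((x)))`. -/
abbrev EW := W →ₗ[ℂ] HahnSeries ℤ W

variable {W}

/-- the element of `ℰ(W)` with prescribed coefficients, when it exists (else `0`). -/
def mkEW (c : W → ℤ → W) : EW W :=
  if h : ∃ g : EW W, ∀ w j, (g w).coeff j = c w j then h.choose else 0

/-- the identity operator `1_W`, as the element `1_W x^0` of `ℰ(W)`. -/
def oneEW : EW W := mkEW fun w j => if j = 0 then w else 0

/-- the raw coefficient function of `a(x₁)b(x₂)` : coefficient of `x₁^m x₂^n` applied to `w`. -/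
def c2 (a b : EW W) (w : W) (m n : ℤ) : W := (a ((b w).coeff n)).coeff m

/-- the raw coefficient function of `u(x₂)v(x₁)` (first index: exponent of `x₁`). -/
def c2swap (u v : EW W) (w : W) (m n : ℤ) : W := (u ((v w).coeff m)).coeff n

/-- a raw two-variable series `W → W[[x₁^{±1},x₂^{±1}]]` lies in `Hom(W, W((x₁,x₂)))`. -/
def IsLT2 (F : W → ℤ → ℤ → W) : Prop :=
  ∀ w, ∃ N : ℤ, ∀ m n : ℤ, (m < N ∨ n < N) → F w m n = 0

/-- multiplication of a raw two-variable series by `p(x₁,x₂) ∈ ℂ[[x₁,x₂]]`. -/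
def ps2Smul (p : MvPowerSeries (Fin 2) ℂ) (F : W → ℤ → ℤ → W) : W → ℤ → ℤ → W :=
  fun w m n => ∑ᶠ ab : ℕ × ℕ,
    (MvPowerSeries.coeff (R := ℂ) (idx2 ab.1 ab.2) p) • F w (m - ab.1) (n - ab.2)

/-- multiplication of a raw series in `(z, x)` by `s ∈ ℂ((x))[[z]]`
(first index: exponent of `z`; second: exponent of `x`). -/
def lzSmul (s : LZ) (F : W → ℤ → ℤ → W) : W → ℤ → ℤ → W :=
  fun w n j => ∑ᶠ ab : ℕ × ℤ, lzCoeff s ab.1 ab.2 • F w (n - ab.1) (j - ab.2)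

/-- substitution `x₁ = φ(x,z)` into a raw two-variable series `F(x₁, x₂)` (with `x₂` renamed
to `x`); the result is indexed by (exponent of `z`, exponent of `x`). -/
def substX1 (φ : LZ) (F : W → ℤ → ℤ → W) : W → ℤ → ℤ → W :=
  fun w n j =>
    if 0 ≤ n then
      ∑ᶠ mk : ℤ × ℤ, lzCoeff (zpowR φ mk.1) n.toNat (j - mk.2) • F w mk.1 mk.2
    else 0

/-- `Y_ℰ^φ(a(x),z)b(x)`, as a raw series (first index: exponent of `z`; second: exponent
of `x`): the unique element `Y` of `ℰ(W)((z))` with `p(φ(x,z),x)·Y = (p(x₁,x)a(x₁)b(x))|_{x₁=φ(x,z)}`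
for a (any) modifier `p` as in the definition of φ-quasi compatibility; junk `0` if none exists. -/
def Yφ (φ : LZ) (a b : EW W) : W → ℤ → ℤ → W :=
  if h : ∃ Y : W → ℤ → ℤ → W,
      (∃ n₀ : ℤ, ∀ w n j, n < n₀ → Y w n j = 0) ∧
      (∀ n : ℤ, ∃ c : EW W, ∀ w j, (c w).coeff j = Y w n j) ∧
      ∃ p : MvPowerSeries (Fin 2) ℂ, substMv p φ ≠ 0 ∧ IsLT2 (ps2Smul p (c2 a b)) ∧
        lzSmul (substMv p φ) Y = substX1 φ (ps2Smul p (c2 a b))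
  then h.choose else fun _ _ _ => 0

/-- the coefficient of `z^n` in `Y_ℰ^φ(a(x),z)b(x)`, as an element of `ℰ(W)`. -/
def YatZ (φ : LZ) (a b : EW W) (n : ℤ) : EW W :=
  mkEW fun w j => Yφ φ a b w n j

/-- `a(x)_n^φ b(x)`, the coefficient of `z^{-n-1}` in `Y_ℰ^φ(a(x),z)b(x)`. -/
def YφCoef (φ : LZ) (a b : EW W) (n : ℤ) : EW W := YatZ φ a b (-n-1)

/-- the ordered pair `(a(x),b(x))` is φ-quasi compatible. -/
def PairQC (φ : LZ) (a b : EW W) : Prop :=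
  ∃ p : MvPowerSeries (Fin 2) ℂ, substMv p φ ≠ 0 ∧ IsLT2 (ps2Smul p (c2 a b))

/-- the ordered pair `(a(x),b(x))` is quasi compatible. -/
def PairQuasiCompat (a b : EW W) : Prop :=
  ∃ p : MvPowerSeries (Fin 2) ℂ, p ≠ 0 ∧ IsLT2 (ps2Smul p (c2 a b))

/-- the raw coefficient function of the product `a₁(x₁)⋯a_r(x_r)` applied to `w`. -/
def prodCoeff : (r : ℕ) → (Fin r → EW W) → (Fin r → ℤ) → W → W
  | 0, _, _, w => w
  | r+1, as, ms, w =>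
      ((as 0) (prodCoeff r (fun i => as i.succ) (fun i => ms i.succ) w)).coeff (ms 0)

/-- multiplication of a raw `r`-variable series by `P ∈ ℂ[[x₁,…,x_r]]`. -/
def mvSmul {r : ℕ} (P : MvPowerSeries (Fin r) ℂ) (F : (Fin r → ℤ) → W) :
    (Fin r → ℤ) → W :=
  fun m => ∑ᶠ k : Fin r →₀ ℕ, MvPowerSeries.coeff (R := ℂ) k P • F (fun i => m i - k i)

/-- the series `p(x_i, x_j) ∈ ℂ[[x₁,…,x_r]]` obtained from `p(x₁,x₂) ∈ ℂ[[x₁,x₂]]`. -/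
def pPair {r : ℕ} (p : MvPowerSeries (Fin 2) ℂ) (i j : Fin r) : MvPowerSeries (Fin r) ℂ :=
  fun k => if ∀ l, l ≠ i → l ≠ j → k l = 0 then MvPowerSeries.coeff (R := ℂ) (idx2 (k i) (k j)) p else 0

/-- the product `Π_{1 ≤ i < j ≤ r} p(x_i,x_j) ∈ ℂ[[x₁,…,x_r]]`. -/
def bigP (r : ℕ) (p : MvPowerSeries (Fin 2) ℂ) : MvPowerSeries (Fin r) ℂ :=
  ∏ ij ∈ Finset.univ.filter (fun ij : Fin r × Fin r => ij.1 < ij.2), pPair p ij.1 ij.2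

/-- a raw `r`-variable series `W → W[[x₁^{±1},…,x_r^{±1}]]` lies in `Hom(W, W((x₁,…,x_r)))`. -/
def IsLTrunc {r : ℕ} (F : W → (Fin r → ℤ) → W) : Prop :=
  ∀ w, ∃ N : ℤ, ∀ m : Fin r → ℤ, (∃ i, m i < N) → F w m = 0

/-- the finite sequence `as` in `ℰ(W)` is φ-quasi compatible. -/
def SeqQC (φ : LZ) {r : ℕ} (as : Fin r → EW W) : Prop :=
  ∃ p : MvPowerSeries (Fin 2) ℂ, substMv p φ ≠ 0 ∧
    IsLTrunc (fun w => mvSmul (bigP r p) (fun m => prodCoeff r as m w))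

/-- the finite sequence `as` in `ℰ(W)` is quasi compatible. -/
def SeqQuasiCompat {r : ℕ} (as : Fin r → EW W) : Prop :=
  ∃ p : MvPowerSeries (Fin 2) ℂ, p ≠ 0 ∧
    IsLTrunc (fun w => mvSmul (bigP r p) (fun m => prodCoeff r as m w))

/-- the finite sequence `as` in `ℰ(W)` is compatible (modifier `(x₁-x₂)^k`). -/
def SeqCompat {r : ℕ} (as : Fin r → EW W) : Prop :=
  ∃ k : ℕ,
    IsLTrunc (fun w => mvSmul (bigP r ((MvPowerSeries.X 0 - MvPowerSeries.X 1) ^ k))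
      (fun m => prodCoeff r as m w))

/-- a subset of `ℰ(W)` is φ-quasi compatible. -/
def SetQC (φ : LZ) (U : Set (EW W)) : Prop :=
  ∀ (r : ℕ) (as : Fin r → EW W), (∀ i, as i ∈ U) → SeqQC φ as

/-- a subset of `ℰ(W)` is quasi compatible. -/
def SetQuasiCompat (U : Set (EW W)) : Prop :=
  ∀ (r : ℕ) (as : Fin r → EW W), (∀ i, as i ∈ U) → SeqQuasiCompat as

/-- a subset of `ℰ(W)` is compatible. -/
def SetCompat (U : Set (EW W)) : Prop :=
  ∀ (r : ℕ) (as : Fin r → EW W), (∀ i, as i ∈ U) → SeqCompat as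

/-- a subspace `V ⊆ ℰ(W)` is `Y_ℰ^φ`-closed. -/
def YClosed (φ : LZ) (V : Submodule ℂ (EW W)) : Prop :=
  ∀ a ∈ V, ∀ b ∈ V, ∀ n : ℤ, YφCoef φ a b n ∈ V

/-!
Compatibility is quasi compatibility with the modifier `(x₁ - x₂)ᵏ ≠ 0`, so everything reduces to:
if `p ≠ 0` then `p(φ(x,z), x) ≠ 0`, which only needs `φ(x,0) = x` and `φ ≠ x`. Write
`φ = x + ψ` with `ψ = zᵐ y(x,z)`, `m ≥ 1`, `y(x,0) ≠ 0`. Then `p(φ, x) = q(ψ, x)` where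
`q(y, x) = p(x + y, x)` is nonzero, the shear being invertible. If `yᵏ xˢ⁰⁻ᵏ` is the
lexicographically least monomial of `q` (first in `k`, then in `s₀`), and `u = y(x,0)ᵏ`, then
the coefficient of `z^(km) x^(s₀ - k + ord u)` in `q(ψ, x)` is `q_{k,s₀}` times the leading
coefficient of `u`, which is nonzero.
-/

open PowerSeries Finset.HasAntidiagonal

section ShearCoeff

variable {R : Type*} [Semiring R]

lemma idx2_eta (d : Fin 2 →₀ ℕ) : idx2 (d 0) (d 1) = d := by
  ext l
  fin_cases l <;> simp [idx2]

/-- The coefficient of `y ^ i * x ^ (s - i)` in `p(x + y, x)`. -/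
def shearCoeff (p : MvPowerSeries (Fin 2) R) (i s : ℕ) : R :=
  ∑ a ∈ Finset.range (s + 1), MvPowerSeries.coeff (idx2 a (s - a)) p * (a.choose i : R)

lemma shearCoeff_eq_coeff {p : MvPowerSeries (Fin 2) R} {a s : ℕ} (has : a ≤ s)
    (h : ∀ a', a < a' → a' ≤ s → MvPowerSeries.coeff (idx2 a' (s - a')) p = 0) :
    shearCoeff p a s = MvPowerSeries.coeff (idx2 a (s - a)) p := by
  rw [shearCoeff, Finset.sum_eq_single_of_mem a (by simpa [Nat.lt_succ_iff] using has)]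
  · simp
  · intro a' ha' hne
    rcases lt_or_gt_of_ne hne with hlt | hgt
    · simp [Nat.choose_eq_zero_of_lt hlt]
    · rw [h a' hgt (by simpa [Nat.lt_succ_iff] using ha'), zero_mul]

/-- The substitution `(x₁, x₂) ↦ (x + y, x)` is invertible, so it does not kill `p ≠ 0`. -/
lemma exists_shearCoeff_ne_zero {p : MvPowerSeries (Fin 2) R} (hp : p ≠ 0) :
    ∃ i s, shearCoeff p i s ≠ 0 := by
  by_contra! h
  have hcoeff : ∀ b a, MvPowerSeries.coeff (idx2 a b) p = 0 := by
    intro b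
    induction b using Nat.strong_induction_on with
    | _ b ih =>
      intro a
      have := shearCoeff_eq_coeff (p := p) (Nat.le_add_right a b) fun a' h₁ h₂ =>
        ih (a + b - a') (by omega) a'
      simpa [this] using h a (a + b)
  exact hp (MvPowerSeries.ext fun d => by simpa [idx2_eta] using hcoeff (d 1) (d 0))

end ShearCoeff

lemma exists_lex_min_ne_zero {M : Type*} [Zero M] {f : ℕ → ℕ → M} (h : ∃ i s, f i s ≠ 0) :
    ∃ k s₀, f k s₀ ≠ 0 ∧ (∀ i < k, ∀ s, f i s = 0) ∧ ∀ s < s₀, f k s = 0 := by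
  classical
  have hk := Nat.find_spec h
  refine ⟨Nat.find h, Nat.find hk, Nat.find_spec hk, fun i hi s => ?_, fun s hs => ?_⟩
  · by_contra hs
    exact Nat.find_min h hi ⟨s, hs⟩
  · exact not_not.1 (Nat.find_min hk hs)

lemma coeff_pow_eq_zero_of_lt {R : Type*} [CommSemiring R] {f : R⟦X⟧} (hf : constantCoeff f = 0)
    {n i : ℕ} (h : n < i) : coeff n (f ^ i) = 0 :=
  X_pow_dvd_iff.1 (pow_dvd_pow_of_dvd (X_dvd_iff.2 hf) i) n h

lemma coeff_X_pow_mul_pow {R : Type*} [CommSemiring R] (m : ℕ) (y : R⟦X⟧) (i n : ℕ) :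
    coeff n ((X ^ m * y) ^ i) = if i * m ≤ n then coeff (n - i * m) (y ^ i) else 0 := by
  rw [mul_pow, ← pow_mul, mul_comm m i, coeff_X_pow_mul']

lemma exists_forall_coeff_eq_zero_of_lt {R ι : Type*} [Zero R] (s : Finset ι)
    (f : ι → LaurentSeries R) : ∃ N : ℤ, ∀ i ∈ s, ∀ t < N, (f i).coeff t = 0 := by
  obtain ⟨N, hN⟩ := (s.image fun i => (f i).order).bddBelow
  refine ⟨N, fun i hi t ht => ?_⟩
  by_cases hfi : f i = 0
  · simp [hfi]
  · exact HahnSeries.coeff_eq_zero_of_lt_order (ht.trans_le (hN (Finset.mem_image_of_mem _ hi)))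

lemma coeff_C_Xl_pow_mul (e n : ℕ) (f : LZ) (j : ℤ) :
    (coeff n (C Xl ^ e * f)).coeff j = (coeff n f).coeff (j - e) := by
  rw [← map_pow, coeff_C_mul, Xl, HahnSeries.single_pow, one_pow, HahnSeries.coeff_single_mul,
    one_mul]
  simp

lemma lzCoeff_add_C_Xl_pow_mul (ψ : LZ) (a b n : ℕ) (j : ℤ) :
    lzCoeff ((ψ + C Xl) ^ a * C Xl ^ b) n j =
      ∑ i ∈ Finset.range (a + 1), (a.choose i : ℂ) * (coeff n (ψ ^ i)).coeff (j - (a + b - i)) := by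
  rw [lzCoeff, add_pow, Finset.sum_mul, map_sum, HahnSeries.coeff_sum]
  refine Finset.sum_congr rfl fun i hi => ?_
  have hia : i ≤ a := Nat.lt_succ_iff.1 (Finset.mem_range.1 hi)
  rw [show ψ ^ i * C Xl ^ (a - i) * (a.choose i : LZ) * C Xl ^ b =
      a.choose i • (C Xl ^ (a - i + b) * ψ ^ i) by rw [nsmul_eq_mul, pow_add]; ring,
    map_nsmul, HahnSeries.coeff_nsmul, Pi.smul_apply, coeff_C_Xl_pow_mul, nsmul_eq_mul]
  congr 3
  omega

lemma exists_sum_choose_mul_coeff_pow_eq_zero {ψ : LZ} (hψ : constantCoeff ψ = 0) (n : ℕ) :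
    ∃ N : ℤ, ∀ (a b : ℕ) (j : ℤ), j < N + a + b →
      ∑ i ∈ Finset.range (a + 1), (a.choose i : ℂ) * (coeff n (ψ ^ i)).coeff (j - (a + b - i))
        = 0 := by
  obtain ⟨N, hN⟩ :=
    exists_forall_coeff_eq_zero_of_lt (Finset.range (n + 1)) fun i => coeff n (ψ ^ i)
  refine ⟨N - n, fun a b j hj => Finset.sum_eq_zero fun i _ => ?_⟩
  rcases le_or_gt i n with hin | hni
  · rw [hN i (Finset.mem_range.2 (Nat.lt_succ_of_le hin)) _ (by omega), mul_zero]
  · rw [coeff_pow_eq_zero_of_lt hψ hni, HahnSeries.coeff_zero, mul_zero]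

lemma finsum_eq_sum_shearCoeff {R : Type*} [CommSemiring R] (p : MvPowerSeries (Fin 2) R)
    (c : ℕ → ℤ → R) (j : ℤ) (M : ℕ)
    (hM : ∀ a b : ℕ, M < a + b →
      ∑ i ∈ Finset.range (a + 1), (a.choose i : R) * c i (j - (a + b - i)) = 0) :
    ∑ᶠ ab : ℕ × ℕ, MvPowerSeries.coeff (idx2 ab.1 ab.2) p *
        ∑ i ∈ Finset.range (ab.1 + 1), (ab.1.choose i : R) * c i (j - (ab.1 + ab.2 - i)) =
      ∑ i ∈ Finset.range (M + 1), ∑ s ∈ Finset.range (M + 1),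
        shearCoeff p i s * c i (j - s + i) := by
  have hsupp : (Function.support fun ab : ℕ × ℕ => MvPowerSeries.coeff (idx2 ab.1 ab.2) p *
      ∑ i ∈ Finset.range (ab.1 + 1), (ab.1.choose i : R) * c i (j - (ab.1 + ab.2 - i))) ⊆
      ↑((Finset.range (M + 1)).biUnion antidiagonal) := by
    rintro ⟨a, b⟩ hab
    simp only [Finset.coe_biUnion, Finset.coe_range, Set.mem_Iio, Set.mem_iUnion,
      Finset.mem_coe, mem_antidiagonal, exists_prop, exists_eq_right']
    by_contra! h
    exact hab (by dsimp only; rw [hM a b (by omega), mul_zero])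
  have hdisj : Set.PairwiseDisjoint ↑(Finset.range (M + 1)) (antidiagonal : ℕ → _) :=
    fun s _ t _ hst => Finset.disjoint_left.2 fun ab h₁ h₂ =>
      hst ((mem_antidiagonal.1 h₁).symm.trans (mem_antidiagonal.1 h₂))
  rw [finsum_eq_sum_of_support_subset _ hsupp, Finset.sum_biUnion hdisj]
  calc _ = ∑ s ∈ Finset.range (M + 1), ∑ ab ∈ antidiagonal s, ∑ i ∈ Finset.range (M + 1),
        MvPowerSeries.coeff (idx2 ab.1 ab.2) p * (ab.1.choose i : R) * c i (j - s + i) := by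
        refine Finset.sum_congr rfl fun s hs => Finset.sum_congr rfl fun ab hab => ?_
        have hab : ab.1 + ab.2 = s := mem_antidiagonal.1 hab
        have hs : s < M + 1 := Finset.mem_range.1 hs
        rw [Finset.mul_sum,
          Finset.sum_subset (Finset.range_subset_range.2 (show ab.1 + 1 ≤ M + 1 by omega))]
        · refine Finset.sum_congr rfl fun i _ => ?_
          rw [mul_assoc, ← hab]
          congr 3
          push_cast
          ring
        · intro i _ hi
          rw [Nat.choose_eq_zero_of_lt (by simpa using hi)]
          simp
    _ = _ := by
        rw [Finset.sum_congr rfl fun s _ => Finset.sum_comm, Finset.sum_comm]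
        refine Finset.sum_congr rfl fun i _ => Finset.sum_congr rfl fun s _ => ?_
        rw [← Finset.sum_mul, shearCoeff, Finset.Nat.sum_antidiagonal_eq_sum_range_succ_mk]

/-- `substMv` is defined through `mkLZ`, so this is where we check that it does not return its
junk value: for fixed `n` the coefficients are bounded below in `j`. -/
lemma lzCoeff_substMv {ψ : LZ} (hψ : constantCoeff ψ = 0) (p : MvPowerSeries (Fin 2) ℂ)
    (n : ℕ) (j : ℤ) :
    lzCoeff (substMv p (ψ + C Xl)) n j = ∑ᶠ ab : ℕ × ℕ, MvPowerSeries.coeff (idx2 ab.1 ab.2) p *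
      lzCoeff ((ψ + C Xl) ^ ab.1 * C Xl ^ ab.2) n j := by
  set c : ℕ → ℤ → ℂ := fun n j => ∑ᶠ ab : ℕ × ℕ, MvPowerSeries.coeff (idx2 ab.1 ab.2) p *
    lzCoeff ((ψ + C Xl) ^ ab.1 * C Xl ^ ab.2) n j
  have hbdd : ∀ n, BddBelow (Function.support (c n)) := fun n => by
    obtain ⟨N, hN⟩ := exists_sum_choose_mul_coeff_pow_eq_zero hψ n
    refine ⟨N, fun j hj => not_lt.1 fun hjN => hj (finsum_eq_zero_of_forall_eq_zero ?_)⟩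
    rintro ⟨a, b⟩
    rw [lzCoeff_add_C_Xl_pow_mul, hN a b j (by omega), mul_zero]
  have hc : ∃ g : LZ, ∀ n j, lzCoeff g n j = c n j :=
    ⟨PowerSeries.mk fun n => ⟨c n, Set.IsWF.isPWO (hbdd n).wellFoundedOn_lt⟩,
      fun n j => by rw [lzCoeff, coeff_mk]⟩
  rw [substMv, mkLZ, dif_pos hc]
  exact hc.choose_spec n j

lemma eventually_lzCoeff_substMv_eq_sum {ψ : LZ} (hψ : constantCoeff ψ = 0)
    (p : MvPowerSeries (Fin 2) ℂ) (n : ℕ) (j : ℤ) :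
    ∀ᶠ M in Filter.atTop, lzCoeff (substMv p (ψ + C Xl)) n j =
      ∑ i ∈ Finset.range (M + 1), ∑ s ∈ Finset.range (M + 1),
        shearCoeff p i s * (coeff n (ψ ^ i)).coeff (j - s + i) := by
  obtain ⟨N, hN⟩ := exists_sum_choose_mul_coeff_pow_eq_zero hψ n
  filter_upwards [Filter.eventually_ge_atTop (j - N).toNat] with M hM
  simp_rw [lzCoeff_substMv hψ, lzCoeff_add_C_Xl_pow_mul]
  exact finsum_eq_sum_shearCoeff p _ j M fun a b hab => hN a b j (by omega)

lemma sum_range_sum_range_eq_of_lex_min {R : Type*} [Semiring R] {D : ℕ → ℕ → R}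
    {c : ℕ → ℤ → R} {k s₀ M : ℕ} {t₀ : ℤ} (hk : k ≤ M) (hs₀ : s₀ ≤ M)
    (hD : ∀ i < k, ∀ s, D i s = 0) (hDk : ∀ s < s₀, D k s = 0)
    (hc : ∀ i, k < i → ∀ t, c i t = 0) (hck : ∀ t < t₀, c k t = 0) :
    ∑ i ∈ Finset.range (M + 1), ∑ s ∈ Finset.range (M + 1),
      D i s * c i ((s₀ : ℤ) - k + t₀ - s + i) = D k s₀ * c k t₀ := by
  rw [Finset.sum_eq_single_of_mem k (Finset.mem_range.2 (by omega)),
    Finset.sum_eq_single_of_mem s₀ (Finset.mem_range.2 (by omega))]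
  · congr 2
    ring
  · intro s _ hs
    rcases lt_or_gt_of_ne hs with hlt | hgt
    · rw [hDk s hlt, zero_mul]
    · rw [hck _ (by omega), mul_zero]
  · intro i _ hi
    rcases lt_or_gt_of_ne hi with hlt | hgt
    · exact Finset.sum_eq_zero fun s _ => by rw [hD i hlt, zero_mul]
    · exact Finset.sum_eq_zero fun s _ => by rw [hc i hgt, mul_zero]

theorem substMv_add_C_Xl_ne_zero {p : MvPowerSeries (Fin 2) ℂ} (hp : p ≠ 0) {ψ : LZ}
    (hψ₀ : constantCoeff ψ = 0) (hψ : ψ ≠ 0) : substMv p (ψ + C Xl) ≠ 0 := by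
  obtain ⟨k, s₀, hks₀, hk, hs₀⟩ := exists_lex_min_ne_zero (exists_shearCoeff_ne_zero hp)
  set m := ψ.order.toNat
  set y := divXPowOrder ψ
  have hψy : X ^ m * y = ψ := X_pow_order_mul_divXPowOrder
  have hy : constantCoeff y ≠ 0 := constantCoeff_divXPowOrder_eq_zero_iff.not.2 hψ
  have hm : 0 < m := by
    refine Nat.pos_of_ne_zero fun hm => hy ?_
    rw [← hψ₀, ← hψy, hm, pow_zero, one_mul]
  set u := constantCoeff y ^ k
  have hcoeff_gt : ∀ i, k < i → ∀ t, (coeff (k * m) (ψ ^ i)).coeff t = 0 := fun i hi t => by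
    rw [← hψy, coeff_X_pow_mul_pow, if_neg (by nlinarith), HahnSeries.coeff_zero]
  have hcoeff_k : coeff (k * m) (ψ ^ k) = u := by
    rw [← hψy, coeff_X_pow_mul_pow, if_pos le_rfl, Nat.sub_self, coeff_zero_eq_constantCoeff,
      map_pow]
  obtain ⟨M, hM, hMk⟩ := ((eventually_lzCoeff_substMv_eq_sum hψ₀ p (k * m)
    ((s₀ : ℤ) - k + u.order)).and (Filter.eventually_ge_atTop (k + s₀))).exists
  rw [sum_range_sum_range_eq_of_lex_min (by omega) (by omega) hk hs₀ hcoeff_gt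
    (fun t ht => by rw [hcoeff_k]; exact HahnSeries.coeff_eq_zero_of_lt_order ht), hcoeff_k] at hM
  intro h0
  refine mul_ne_zero hks₀ (HahnSeries.coeff_order_eq_zero.not.2 (pow_ne_zero k hy))
    (hM.symm.trans ?_)
  simp [h0, lzCoeff]

theorem substMv_ne_zero {φ : LZ} (hφ : constantCoeff φ = Xl) (hφx : φ ≠ C Xl)
    {p : MvPowerSeries (Fin 2) ℂ} (hp : p ≠ 0) : substMv p φ ≠ 0 := by
  simpa using substMv_add_C_Xl_ne_zero hp (ψ := φ - C Xl) (by simp [hφ]) (sub_ne_zero.2 hφx)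

lemma SeqCompat.seqQuasiCompat {r : ℕ} {as : Fin r → EW W} (h : SeqCompat as) :
    SeqQuasiCompat as :=
  let ⟨k, hk⟩ := h
  ⟨_, pow_ne_zero k (sub_ne_zero.2 (MvPowerSeries.X_inj.not.2 (by decide))), hk⟩

lemma SeqQuasiCompat.seqQC {φ : LZ} (hφ : constantCoeff φ = Xl) (hφx : φ ≠ C Xl) {r : ℕ}
    {as : Fin r → EW W} (h : SeqQuasiCompat as) : SeqQC φ as :=
  let ⟨p, hp, hP⟩ := h
  ⟨p, substMv_ne_zero hφ hφx hp, hP⟩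

/-- Let `φ` be an associate of `F_a` with `φ(x,z) ≠ x` and `W` a complex vector space.
Every compatible subset of `ℰ(W)` is φ-quasi compatible, and every quasi compatible
subset of `ℰ(W)` is φ-quasi compatible. -/
theorem compat_implies_phi_quasicompat
    (φ : LZ) (h : IsAssociate φ) (hx : φ ≠ PowerSeries.C (R := L) Xl) (U : Set (EW W)) :
    (SetCompat U → SetQC φ U) ∧ (SetQuasiCompat U → SetQC φ U) := by
  have hqc : SetQuasiCompat U → SetQC φ U := fun hU r as has => (hU r as has).seqQC h.1 hx
  exact ⟨fun hU => hqc fun r as has => (hU r as has).seqQuasiCompat, hqc⟩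

end
end
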